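/- arXiv:2501.14536 — 5 statements merged into one kernel-verified Lean document; each statement's English description precedes it below -/
import Mathlib

section
/- det(Eᵀ D E) = Σ_{i_0=1}^N Σ_{i_1=1}^N ⋯ Σ_{i_d=1}^N w_{i_0} w_{i_1} ⋯ w_{i_d} · (x_{i_1} − x)(x_{i_2} − x)² ⋯ (x_{i_d} − x)^d · ∏_{0 ≤ k < l ≤ d} (x_{i_l} − x_{i_k}). -/
/-!
Row `j` of `Eᵀ D E` is `∑ i, w i (xs i - x)^j • E i`, so multilinearity of the determinant in
the rows expands it over all maps `σ : Fin (d + 1) → Fin N`; the determinant left in each term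
is the Vandermonde determinant of the nodes `xs (σ k) - x`.
-/

open Matrix

namespace Matrix

variable {m n R : Type*} [Fintype m] [Fintype n] [DecidableEq m] [CommRing R]

/-- Cauchy–Binet before discarding the non-injective `σ`, whose submatrices have repeated rows. -/
theorem det_mul_eq_sum_prod_mul_det_submatrix (A : Matrix m n R) (B : Matrix n m R) :
    (A * B).det = ∑ σ : m → n, (∏ k, A k (σ k)) * (B.submatrix σ id).det := by
  have hrows : A * B = Matrix.of fun k => ∑ i, A k i • B i := by
    ext k j
    simp only [mul_apply, of_apply, Finset.sum_apply, Pi.smul_apply, smul_eq_mul]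
  rw [hrows]
  refine (detRowAlternating.toMultilinearMap.map_sum fun k i => A k i • B i).trans ?_
  refine Finset.sum_congr rfl fun σ _ => ?_
  exact detRowAlternating.toMultilinearMap.map_smul_univ (fun k => A k (σ k)) (fun k => B (σ k))

end Matrix

theorem det_ETDE_explicit_general
    (d N : ℕ) (x : ℝ) (xs : Fin N → ℝ) (w : Fin N → ℝ)
    (E : Matrix (Fin N) (Fin (d + 1)) ℝ)
    (hE : ∀ i j, E i j = (xs i - x) ^ (j : ℕ))
    (D : Matrix (Fin N) (Fin N) ℝ) (hD : D = Matrix.diagonal w) :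
    (Eᵀ * D * E).det =
      ∑ σ : Fin (d + 1) → Fin N,
        (∏ k, w (σ k)) * (∏ k, (xs (σ k) - x) ^ (k : ℕ)) *
          ∏ k : Fin (d + 1), ∏ l ∈ Finset.Ioi k, (xs (σ l) - xs (σ k)) := by
  subst hD
  rw [det_mul_eq_sum_prod_mul_det_submatrix]
  refine Finset.sum_congr rfl fun σ _ => ?_
  have hvandermonde : E.submatrix σ id = vandermonde fun k => xs (σ k) - x := by
    ext k j
    simp [hE]
  rw [hvandermonde, det_vandermonde]
  simp only [mul_diagonal, transpose_apply, hE, Finset.prod_mul_distrib, sub_sub_sub_cancel_right]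
  ring

/-- explicit multi-index expansion of `det (Eᵀ D E)` for the
MLS normal matrix with nodes `xs`, weights `w`, and monomial basis
`(· - x)^j`, `j = 0, …, d`. -/
theorem det_ETDE_explicit
    (d N : ℕ) (hN : d + 1 ≤ N) (x : ℝ) (xs : Fin N → ℝ) (w : Fin N → ℝ)
    (E : Matrix (Fin N) (Fin (d + 1)) ℝ)
    (hE : ∀ i j, E i j = (xs i - x) ^ (j : ℕ))
    (D : Matrix (Fin N) (Fin N) ℝ) (hD : D = Matrix.diagonal w) :
    (Eᵀ * D * E).det =
      ∑ σ : Fin (d + 1) → Fin N,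
        (∏ k, w (σ k)) * (∏ k, (xs (σ k) - x) ^ (k : ℕ)) *
          ∏ k : Fin (d + 1), ∏ l ∈ Finset.Ioi k, (xs (σ l) - xs (σ k)) :=
  det_ETDE_explicit_general d N x xs w E hE D hD
end

section
/- Assume det(Eᵀ D E) ≠ 0. Then for every index i_0 ∈ {1, …, N}, the moving-least-squares coefficient C_{i_0}(x) = (D E (Eᵀ D E)^{-1})_{i_0, 0} has the explicit form C_{i_0}(x) = (w_{i_0} / det(Eᵀ D E)) · Σ_{i_1=1}^N ⋯ Σ_{i_d=1}^N w_{i_1} ⋯ w_{i_d} · (x_{i_1} − x)(x_{i_2} − x)² ⋯ (x_{i_d} − x)^d · ∏_{0 ≤ k < l ≤ d} (x_{i_l} − x_{i_k}). -/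
open Matrix Finset

lemma sum_mul_adjugate {n : Type*} [DecidableEq n] [Fintype n]
    (A : Matrix n n ℝ) (v : n → ℝ) (j : n) :
    ∑ k, v k * adjugate A k j = (A.updateRow j v).det := by
  have h1 : ∑ k, v k * adjugate A k j = (adjugate Aᵀ *ᵥ v) j := by
    rw [← adjugate_transpose]
    simp [mulVec, dotProduct, transpose_apply, mul_comm]
  rw [h1, ← cramer_eq_adjugate_mulVec, cramer_apply, updateCol_transpose, det_transpose]

/-- explicit form of the MLS coefficients
`C_{i₀}(x) = (D E (Eᵀ D E)⁻¹)_{i₀,0}` when `det (Eᵀ D E) ≠ 0`. -/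
theorem mls_coefficient_explicit
    (d N : ℕ) (hN : d + 1 ≤ N) (x : ℝ) (xs : Fin N → ℝ) (w : Fin N → ℝ)
    (E : Matrix (Fin N) (Fin (d + 1)) ℝ)
    (hE : ∀ i j, E i j = (xs i - x) ^ (j : ℕ))
    (D : Matrix (Fin N) (Fin N) ℝ) (hD : D = Matrix.diagonal w)
    (hdet : (Eᵀ * D * E).det ≠ 0) :
    ∀ i0 : Fin N,
      (D * E * (Eᵀ * D * E)⁻¹) i0 0 =
        w i0 / (Eᵀ * D * E).det *
          ∑ τ : Fin d → Fin N,
            (∏ k, w (τ k)) * (∏ k : Fin d, (xs (τ k) - x) ^ ((k : ℕ) + 1)) *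
              ∏ k : Fin (d + 1), ∏ l ∈ Finset.Ioi k,
                (xs ((Fin.cons i0 τ : Fin (d + 1) → Fin N) l) -
                  xs ((Fin.cons i0 τ : Fin (d + 1) → Fin N) k)) := by
  intro i0
  set y : Fin N → ℝ := fun i => xs i - x with hy
  set M : Matrix (Fin (d + 1)) (Fin (d + 1)) ℝ := Eᵀ * D * E with hM
  -- entries of M
  have hMentry : ∀ j k : Fin (d + 1), M j k = ∑ i, (w i * y i ^ (j : ℕ)) * y i ^ (k : ℕ) := by
    intro j k
    rw [hM, hD, Matrix.mul_apply]
    apply Finset.sum_congr rfl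
    intro i _
    rw [Matrix.mul_diagonal, Matrix.transpose_apply, hE, hE]
    simp only [hy]
    ring
  have hinv : M⁻¹ = (M.det)⁻¹ • adjugate M := by
    rw [Matrix.inv_def, Ring.inverse_eq_inv']
  have hDE : ∀ k : Fin (d + 1), (D * E) i0 k = w i0 * y i0 ^ (k : ℕ) := by
    intro k
    rw [hD, Matrix.diagonal_mul, hE]
  have hentry : (D * E * M⁻¹) i0 0 =
      (M.det)⁻¹ * (w i0 * (M.updateRow 0 fun k => y i0 ^ (k : ℕ)).det) := by
    rw [hinv, Matrix.mul_smul, Matrix.smul_apply, smul_eq_mul, Matrix.mul_apply]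
    congr 1
    rw [← sum_mul_adjugate M (fun k => y i0 ^ (k : ℕ)) 0, Finset.mul_sum]
    apply Finset.sum_congr rfl
    intro k _
    rw [hDE k]; ring
  -- the multilinear expansion
  set g : Fin (d + 1) → Fin N → (Fin (d + 1) → ℝ) :=
    fun j i k => (if j = 0 then 1 else w i * y i ^ (j : ℕ)) * y i ^ (k : ℕ) with hg
  set A : Fin (d + 1) → Finset (Fin N) := fun j => if j = 0 then {i0} else Finset.univ with hA
  have hrows : (M.updateRow 0 fun k => y i0 ^ (k : ℕ)) = fun j => ∑ i ∈ A j, g j i := by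
    funext j
    by_cases hj : j = 0
    · subst hj
      simp [hA, hg]
    · rw [Matrix.updateRow_ne hj]
      funext k
      simp only [hA, hg, if_neg hj]
      rw [hMentry j k, Finset.sum_apply]
    -- second case done
  have hexp : (M.updateRow 0 fun k => y i0 ^ (k : ℕ)).det =
      ∑ σ ∈ Fintype.piFinset A, Matrix.det (Matrix.of fun j => g j (σ j)) := by
    rw [hrows]
    exact (Matrix.detRowAlternating :
      (Fin (d + 1) → ℝ) [⋀^Fin (d + 1)]→ₗ[ℝ] ℝ).toMultilinearMap.map_sum_finset g A
  -- per-term computation for σ = Fin.cons i0 τ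
  have hterm : ∀ τ : Fin d → Fin N,
      Matrix.det (Matrix.of fun j => g j ((Fin.cons i0 τ : Fin (d + 1) → Fin N) j)) =
        (∏ k, w (τ k)) * (∏ k : Fin d, (xs (τ k) - x) ^ ((k : ℕ) + 1)) *
          ∏ k : Fin (d + 1), ∏ l ∈ Finset.Ioi k,
            (xs ((Fin.cons i0 τ : Fin (d + 1) → Fin N) l) -
              xs ((Fin.cons i0 τ : Fin (d + 1) → Fin N) k)) := by
    intro τ
    set σ : Fin (d + 1) → Fin N := Fin.cons i0 τ with hσ
    have h1 : (Matrix.of fun j => g j (σ j)) =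
        Matrix.of (fun j k => (if j = 0 then 1 else w (σ j) * y (σ j) ^ (j : ℕ)) *
          vandermonde (fun j => y (σ j)) j k) := by
      funext j k
      simp [hg, vandermonde]
    rw [h1, Matrix.det_mul_column, Matrix.det_vandermonde]
    have h2 : (∏ j : Fin (d + 1), (if j = 0 then 1 else w (σ j) * y (σ j) ^ (j : ℕ))) =
        (∏ k, w (τ k)) * (∏ k : Fin d, (xs (τ k) - x) ^ ((k : ℕ) + 1)) := by
      rw [Fin.prod_univ_succ, if_pos rfl, one_mul, ← Finset.prod_mul_distrib]
      apply Finset.prod_congr rfl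
      intro k _
      rw [if_neg (Fin.succ_ne_zero k), hσ, Fin.cons_succ]
      simp only [hy, Fin.val_succ]
    have h3 : (∏ k : Fin (d + 1), ∏ l ∈ Finset.Ioi k, (y (σ l) - y (σ k))) =
        ∏ k : Fin (d + 1), ∏ l ∈ Finset.Ioi k, (xs (σ l) - xs (σ k)) := by
      apply Finset.prod_congr rfl; intro k _
      apply Finset.prod_congr rfl; intro l _
      simp only [hy]; ring
    rw [h2, h3]
  -- reindex the sum over piFinset A by τ
  have hsum : ∑ σ ∈ Fintype.piFinset A, Matrix.det (Matrix.of fun j => g j (σ j)) =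
      ∑ τ : Fin d → Fin N,
        Matrix.det (Matrix.of fun j => g j ((Fin.cons i0 τ : Fin (d + 1) → Fin N) j)) := by
    apply Finset.sum_nbij' (i := fun σ => Fin.tail σ) (j := fun τ => Fin.cons i0 τ)
    · intro σ hσ; exact Finset.mem_univ _
    · intro τ hτ
      rw [Fintype.mem_piFinset]
      intro j
      rcases Fin.eq_zero_or_eq_succ j with h | ⟨k, rfl⟩
      · subst h; simp [hA]
      · simp [hA, Fin.succ_ne_zero k]
    · intro σ hσ
      rw [Fintype.mem_piFinset] at hσ
      have h0 : σ 0 = i0 := by have := hσ 0; simpa [hA] using this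
      rw [← h0]; exact Fin.cons_self_tail σ
    · intro τ hτ
      funext k
      simp [Fin.tail]
    · intro σ hσ
      rw [Fintype.mem_piFinset] at hσ
      have h0 : σ 0 = i0 := by have := hσ 0; simpa [hA] using this
      congr 1
      funext j
      congr 1
      rw [← h0, Fin.cons_self_tail σ]
  rw [hentry, hexp, hsum]
  rw [Finset.sum_congr rfl fun τ _ => hterm τ]
  rw [div_eq_mul_inv]
  ring
end

section
/- Assume Eᵀ D E is invertible and define the MLS quasi-interpolant Q(f)(x) = Σ_{i=1}^N C_i(x) f(x_i) with C_i(x) = (D E (Eᵀ D E)^{-1})_{i,0}. Then Q reproduces polynomials of degree at most d: for every real polynomial p with deg p ≤ d, Σ_{i=1}^N C_i(x) p(x_i) = p(x). -/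
open Matrix

/-- the MLS quasi-interpolant
`Q(f)(x) = ∑ i, C_i(x) f(x_i)` with `C_i(x) = (D E (Eᵀ D E)⁻¹)_{i,0}`
reproduces polynomials of degree at most `d`. -/
theorem mls_reproduces_polynomials
    (d N : ℕ) (hN : d + 1 ≤ N) (x : ℝ) (xs : Fin N → ℝ) (w : Fin N → ℝ)
    (E : Matrix (Fin N) (Fin (d + 1)) ℝ)
    (hE : ∀ i j, E i j = (xs i - x) ^ (j : ℕ))
    (D : Matrix (Fin N) (Fin N) ℝ) (hD : D = Matrix.diagonal w)
    (hinv : IsUnit (Eᵀ * D * E))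
    (p : Polynomial ℝ) (hp : p.degree ≤ (d : WithBot ℕ)) :
    ∑ i, (D * E * (Eᵀ * D * E)⁻¹) i 0 * p.eval (xs i) = p.eval x := by
  set M := (Eᵀ * D * E)⁻¹ with hM
  have hdet : IsUnit (Eᵀ * D * E).det := (Matrix.isUnit_iff_isUnit_det _).mp hinv
  have hone : (Eᵀ * D * E) * M = 1 := Matrix.mul_nonsing_inv _ hdet
  set q := p.comp (Polynomial.X + Polynomial.C x) with hq
  have hqdeg : q.natDegree < d + 1 := by
    have h := Polynomial.natDegree_comp (p := p) (q := Polynomial.X + Polynomial.C x)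
    rw [hq, h]
    simpa [Polynomial.natDegree_X_add_C] using
      Nat.lt_succ_of_le (Polynomial.natDegree_le_iff_degree_le.mpr hp)
  have heval : ∀ i, p.eval (xs i) = ∑ j : Fin (d + 1), q.coeff j * E i j := by
    intro i
    have h1 : p.eval (xs i) = q.eval (xs i - x) := by
      simp [hq, Polynomial.eval_comp]
    rw [h1, Polynomial.eval_eq_sum_range' hqdeg, ← Fin.sum_univ_eq_sum_range]
    exact Finset.sum_congr rfl fun j _ => by rw [hE]
  calc ∑ i, (D * E * M) i 0 * p.eval (xs i)
      = ∑ j : Fin (d + 1), q.coeff j * ((Eᵀ * D * E * M) j 0) := by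
        simp only [heval, Finset.mul_sum, Finset.sum_mul]
        rw [Finset.sum_comm]
        refine Finset.sum_congr rfl fun j _ => ?_
        rw [show Eᵀ * D * E * M = Eᵀ * (D * E * M) by simp [Matrix.mul_assoc], Matrix.mul_apply,
          Finset.mul_sum]
        exact Finset.sum_congr rfl fun i _ => by
          simp [Matrix.transpose_apply]; ring
    _ = q.coeff 0 := by
        rw [hone]
        simp [Matrix.one_apply, Finset.sum_ite_eq']
    _ = p.eval x := by
        rw [Polynomial.coeff_zero_eq_eval_zero]
        simp [hq, Polynomial.eval_comp]
end

section
/- Let a < b, let f : ℝ → ℝ be (d+1)-times continuously differentiable on [a, b], let x ∈ [a, b] and x_1, …, x_N ∈ [a, b], and let c_1, …, c_N be real coefficients that reproduce polynomials of degree ≤ d at x, i.e., Σ_{i=1}^N c_i p(x_i) = p(x) for every polynomial p with deg p ≤ d. Set R = max{ |x_i − x| : 1 ≤ i ≤ N, c_i ≠ 0 }. Then |Σ_{i=1}^N c_i f(x_i) − f(x)| ≤ (Σ_{i=1}^N |c_i|) · R^{d+1}/(d+1)! · sup_{ξ ∈ [a,b]} |f^{(d+1)}(ξ)|. -/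
/-!
Let `p` be the degree-`d` Taylor polynomial of `f` at `x`. Reproduction gives
`∑ cᵢ p(xᵢ) = p(x) = f(x)`, so the error is `∑ cᵢ (f(xᵢ) - p(xᵢ))`, and each Taylor remainder
is bounded by `M |xᵢ - x|^(d+1) / (d+1)!` through the Lagrange form of the remainder.
-/

open Set Polynomial Finset
open scoped Nat

theorem iteratedDerivWithin_subset {𝕜 F : Type*} [NontriviallyNormedField 𝕜]
    [NormedAddCommGroup F] [NormedSpace 𝕜 F] {f : 𝕜 → F} {s t : Set 𝕜} {n : ℕ} {x : 𝕜}
    (st : s ⊆ t) (hs : UniqueDiffOn 𝕜 s) (ht : UniqueDiffOn 𝕜 t) (hf : ContDiffOn 𝕜 n f t)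
    (hx : x ∈ s) :
    iteratedDerivWithin n f s x = iteratedDerivWithin n f t x := by
  simp only [iteratedDerivWithin_eq_iteratedFDerivWithin,
    iteratedFDerivWithin_subset st hs ht hf hx]

theorem taylorWithinEval_subset {E : Type*} [NormedAddCommGroup E] [NormedSpace ℝ E]
    {f : ℝ → E} {s t : Set ℝ} {n : ℕ} {x₀ : ℝ} (st : s ⊆ t) (hs : UniqueDiffOn ℝ s)
    (ht : UniqueDiffOn ℝ t) (hf : ContDiffOn ℝ n f t) (hx₀ : x₀ ∈ s) (x : ℝ) :
    taylorWithinEval f n s x₀ x = taylorWithinEval f n t x₀ x := by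
  simp only [taylor_within_apply]
  refine sum_congr rfl fun k hk => ?_
  rw [iteratedDerivWithin_subset st hs ht (hf.of_le ?_) hx₀]
  exact_mod_cast Nat.lt_succ_iff.mp (mem_range.mp hk)

theorem abs_sub_taylorWithinEval_le {f : ℝ → ℝ} {a b x y M : ℝ} {n : ℕ}
    (hf : ContDiffOn ℝ (n + 1) f (Icc a b)) (hx : x ∈ Icc a b) (hy : y ∈ Icc a b)
    (hM : ∀ ξ ∈ Icc a b, |iteratedDerivWithin (n + 1) f (Icc a b) ξ| ≤ M) :
    |f y - taylorWithinEval f n (Icc a b) x y| ≤ M * |y - x| ^ (n + 1) / (n + 1)! := by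
  obtain rfl | hxy := eq_or_ne x y
  · simp [taylorWithinEval_self]
  have hab : a < b := by
    by_contra! hba
    exact hxy (subsingleton_Icc_of_ge hba hx hy)
  have hsub : uIcc x y ⊆ Icc a b := uIcc_subset_Icc hx hy
  have hfxy : ContDiffOn ℝ (n + 1) f (uIcc x y) := hf.mono hsub
  obtain ⟨ξ, hξ, hrem⟩ := taylor_mean_remainder_lagrange hxy hfxy.of_succ
    ((hfxy.differentiableOn_iteratedDerivWithin (by norm_cast; omega)
      (uniqueDiffOn_uIcc hxy)).mono uIoo_subset_uIcc_self)
  have hξ : ξ ∈ uIcc x y := uIoo_subset_uIcc_self hξ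
  rw [taylorWithinEval_subset hsub (uniqueDiffOn_uIcc hxy) (uniqueDiffOn_Icc hab) hf.of_succ
      left_mem_uIcc,
    iteratedDerivWithin_subset hsub (uniqueDiffOn_uIcc hxy) (uniqueDiffOn_Icc hab) hf hξ] at hrem
  rw [hrem, abs_div, abs_mul, abs_pow, Nat.abs_cast]
  gcongr
  exact hM ξ (hsub hξ)

/-- Mathlib's `taylorWithin` lives in `PolynomialModule ℝ ℝ`; this is the same polynomial in
`ℝ[X]`, where degree bounds are available. -/
noncomputable def taylorPolynomial (f : ℝ → ℝ) (n : ℕ) (s : Set ℝ) (x₀ : ℝ) : ℝ[X] :=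
  ∑ k ∈ range (n + 1), C (taylorCoeffWithin f k s x₀) * (X - C x₀) ^ k

theorem eval_taylorPolynomial (f : ℝ → ℝ) (n : ℕ) (s : Set ℝ) (x₀ x : ℝ) :
    (taylorPolynomial f n s x₀).eval x = taylorWithinEval f n s x₀ x := by
  simp only [taylorPolynomial, taylor_within_apply, taylorCoeffWithin, eval_finsetSum, eval_mul,
    eval_C, eval_pow, eval_sub, eval_X, smul_eq_mul]
  exact sum_congr rfl fun k _ => by ring

theorem degree_taylorPolynomial_le (f : ℝ → ℝ) (n : ℕ) (s : Set ℝ) (x₀ : ℝ) :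
    (taylorPolynomial f n s x₀).degree ≤ n := by
  refine degree_le_of_natDegree_le (natDegree_sum_le_of_forall_le _ _ fun k hk => ?_)
  refine (natDegree_C_mul_le _ _).trans
    ((natDegree_pow_le_of_le k (natDegree_X_sub_C_le _)).trans ?_)
  simpa [Nat.lt_succ_iff] using hk

theorem abs_sum_mul_le_sum_abs_mul {ι : Type*} (s : Finset ι) (c g : ι → ℝ) {B : ℝ}
    (hg : ∀ i ∈ s, c i ≠ 0 → |g i| ≤ B) :
    |∑ i ∈ s, c i * g i| ≤ (∑ i ∈ s, |c i|) * B := by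
  rw [sum_mul]
  refine (abs_sum_le_sum_abs _ _).trans (sum_le_sum fun i hi => ?_)
  obtain hci | hci := eq_or_ne (c i) 0
  · simp [hci]
  · rw [abs_mul]
    exact mul_le_mul_of_nonneg_left (hg i hi hci) (abs_nonneg _)

theorem polynomial_reproduction_error_bound_general
    (a b : ℝ) (d N : ℕ) (f : ℝ → ℝ)
    (hf : ContDiffOn ℝ (d + 1) f (Set.Icc a b))
    (x : ℝ) (hx : x ∈ Set.Icc a b)
    (xs : Fin N → ℝ) (hxs : ∀ i, xs i ∈ Set.Icc a b)
    (c : Fin N → ℝ)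
    (hrep : ∀ p : Polynomial ℝ, p.degree ≤ (d : WithBot ℕ) →
      ∑ i, c i * p.eval (xs i) = p.eval x)
    (R : ℝ)
    (hRub : ∀ i, c i ≠ 0 → |xs i - x| ≤ R)
    (M : ℝ)
    (hM : ∀ ξ ∈ Set.Icc a b, |iteratedDerivWithin (d + 1) f (Set.Icc a b) ξ| ≤ M) :
    |∑ i, c i * f (xs i) - f x| ≤
      (∑ i, |c i|) * R ^ (d + 1) / (Nat.factorial (d + 1)) * M := by
  set p := taylorPolynomial f d (Icc a b) x
  have hp : ∑ i, c i * p.eval (xs i) = f x := by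
    rw [hrep p (degree_taylorPolynomial_le ..), eval_taylorPolynomial, taylorWithinEval_self]
  have hM0 : 0 ≤ M := (abs_nonneg _).trans (hM x hx)
  calc |∑ i, c i * f (xs i) - f x|
      = |∑ i, c i * (f (xs i) - p.eval (xs i))| := by
        simp only [mul_sub, sum_sub_distrib, hp]
    _ ≤ (∑ i, |c i|) * (M * R ^ (d + 1) / (d + 1)!) := by
        refine abs_sum_mul_le_sum_abs_mul _ _ _ fun i _ hci => ?_
        rw [eval_taylorPolynomial]
        refine (abs_sub_taylorWithinEval_le hf hx (hxs i) hM).trans ?_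
        gcongr
        exact hRub i hci
    _ = (∑ i, |c i|) * R ^ (d + 1) / (Nat.factorial (d + 1)) * M := by ring

/-- Taylor-type error bound for any coefficients `c_i` that
reproduce polynomials of degree `≤ d` at `x`:
`|∑ c_i f(x_i) − f(x)| ≤ (∑ |c_i|) · R^{d+1}/(d+1)! · sup_{ξ∈[a,b]} |f^{(d+1)}(ξ)|`,
where `R = max{|x_i − x| : c_i ≠ 0}`. -/
theorem polynomial_reproduction_error_bound
    (a b : ℝ) (hab : a < b) (d N : ℕ) (f : ℝ → ℝ)
    (hf : ContDiffOn ℝ (d + 1) f (Set.Icc a b))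
    (x : ℝ) (hx : x ∈ Set.Icc a b)
    (xs : Fin N → ℝ) (hxs : ∀ i, xs i ∈ Set.Icc a b)
    (c : Fin N → ℝ)
    (hrep : ∀ p : Polynomial ℝ, p.degree ≤ (d : WithBot ℕ) →
      ∑ i, c i * p.eval (xs i) = p.eval x)
    (R : ℝ)
    (hRub : ∀ i, c i ≠ 0 → |xs i - x| ≤ R)
    (hRmem : ∃ i, c i ≠ 0 ∧ |xs i - x| = R)
    (M : ℝ)
    (hM : ∀ ξ ∈ Set.Icc a b, |iteratedDerivWithin (d + 1) f (Set.Icc a b) ξ| ≤ M) :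
    |∑ i, c i * f (xs i) - f x| ≤
      (∑ i, |c i|) * R ^ (d + 1) / (Nat.factorial (d + 1)) * M :=
  polynomial_reproduction_error_bound_general a b d N f hf x hx xs hxs c hrep R hRub M hM
end

section
/- Let m ≥ 1, d ≥ 0, t ≥ 1 be given with t a real number, let h ∈ (0, 1], and let ε be a real number with 0 < ε ≤ h^{t(d+1)}. Let θ_1, …, θ_m be nonnegative reals with Σ_{k=1}^m θ_k = 1 and let I_1, …, I_m be nonnegative reals (the smoothness indicators). Let K_1 ⊆ {1, …, m} and suppose there are constants θ_min > 0, c_1 ≥ 0, μ > 0, A ≥ 0, M ≥ 0 and an index k_0 ∈ K_1 such that: θ_{k_0} ≥ θ_min; I_k ≤ c_1 · h^{d+1} for all k ∈ K_1; I_k ≥ μ for all k ∉ K_1; and real numbers p_1, …, p_m and y satisfy |p_k − y| ≤ A · h^{d+1} for k ∈ K_1 and |p_k − y| ≤ M for k ∉ K_1. Define α_k = θ_k / (I_k^t + ε) and β_k = α_k / Σ_{j=1}^m α_j. Then |Σ_{k=1}^m β_k p_k − y| ≤ (A + m·M·(c_1^t + 1)/(θ_min · μ^t)) · h^{d+1}.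 -/
/-! Since the normalized weights `β_k` are nonnegative and sum to one, the error is a
`β`-weighted average of the local errors `|p_k - y|`, which are `O(h^{d+1})` on `K1`.
On a rough subdomain `α_k ≤ μ^{-t}`, while on the smooth subdomain `k0` both `I_{k0}^t` and
`ε` are `O(h^{t(d+1)}) ⊆ O(h^{d+1})`, so `α_{k0} ≥ θmin / ((c1^t + 1) h^{d+1})`. Hence a rough
weight satisfies `β_k ≤ α_k / α_{k0} = O(h^{d+1})`, and the at most `m` rough terms contribute
`O(M h^{d+1})`. -/

open Finset

noncomputable def wenoWeight {ι : Type*} (θ I : ι → ℝ) (t ε : ℝ) (k : ι) : ℝ :=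
  θ k / (I k ^ t + ε)

section WeightedAverage

variable {ι : Type*} [Fintype ι] (w : ι → ℝ)

theorem abs_sum_mul_sub_le_sum_mul_abs_sub (p : ι → ℝ) (y : ℝ) (hw0 : ∀ k, 0 ≤ w k)
    (hw1 : ∑ k, w k = 1) : |∑ k, w k * p k - y| ≤ ∑ k, w k * |p k - y| := by
  have hcentered : ∑ k, w k * p k - y = ∑ k, w k * (p k - y) := by
    simp only [mul_sub, sum_sub_distrib, ← sum_mul, hw1, one_mul]
  rw [hcentered]
  refine (abs_sum_le_sum_abs _ _).trans (sum_le_sum fun k _ => ?_)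
  rw [abs_mul, abs_of_nonneg (hw0 k)]

theorem sum_mul_le_add_card_mul [DecidableEq ι] (e : ι → ℝ) (K : Finset ι) {E C : ℝ}
    (hw0 : ∀ k, 0 ≤ w k) (hw1 : ∑ k, w k = 1) (hE : 0 ≤ E) (hC : 0 ≤ C)
    (hon : ∀ k ∈ K, e k ≤ E) (hoff : ∀ k ∉ K, w k * e k ≤ C) :
    ∑ k, w k * e k ≤ E + Fintype.card ι * C := by
  rw [← sum_add_sum_compl K]
  gcongr ?_ + ?_
  · calc ∑ k ∈ K, w k * e k ≤ ∑ k ∈ K, w k * E :=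
          sum_le_sum fun k hk => mul_le_mul_of_nonneg_left (hon k hk) (hw0 k)
      _ = (∑ k ∈ K, w k) * E := (sum_mul ..).symm
      _ ≤ 1 * E := by
          gcongr
          rw [← hw1]
          exact sum_le_sum_of_subset_of_nonneg (subset_univ K) fun k _ _ => hw0 k
      _ = E := one_mul E
  · calc ∑ k ∈ Kᶜ, w k * e k ≤ ∑ _k ∈ Kᶜ, C := sum_le_sum fun k hk => hoff k (mem_compl.mp hk)
      _ = #Kᶜ * C := by rw [sum_const, nsmul_eq_mul]
      _ ≤ Fintype.card ι * C := by gcongr; exact card_le_univ _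

theorem div_sum_le_div_of_pos (hw0 : ∀ k, 0 ≤ w k) {k0 : ι} (hk0 : 0 < w k0) (k : ι) :
    w k / ∑ j, w j ≤ w k / w k0 :=
  div_le_div_of_nonneg_left (hw0 k) hk0 (single_le_sum (fun j _ => hw0 j) (mem_univ k0))

end WeightedAverage

theorem rpow_add_le_mul_of_le_mul {I c H ε t : ℝ} (hI : 0 ≤ I) (hc : 0 ≤ c) (hH0 : 0 ≤ H)
    (hH1 : H ≤ 1) (ht : 1 ≤ t) (hIc : I ≤ c * H) (hε : ε ≤ H ^ t) :
    I ^ t + ε ≤ (c ^ t + 1) * H := by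
  have hHt : H ^ t ≤ H := Real.rpow_le_self_of_le_one hH0 hH1 ht
  have hIt : I ^ t ≤ c ^ t * H ^ t :=
    calc I ^ t ≤ (c * H) ^ t := Real.rpow_le_rpow hI hIc (by linarith)
      _ = c ^ t * H ^ t := Real.mul_rpow hc hH0
  have hct : 0 ≤ c ^ t := Real.rpow_nonneg hc t
  nlinarith

section WenoWeight

variable {ι : Type*} {θ I : ι → ℝ} {t ε : ℝ}

theorem wenoWeight_nonneg (hθ : ∀ k, 0 ≤ θ k) (hI : ∀ k, 0 ≤ I k) (hε : 0 ≤ ε) (k : ι) :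
    0 ≤ wenoWeight θ I t ε k :=
  div_nonneg (hθ k) (add_nonneg (Real.rpow_nonneg (hI k) t) hε)

theorem wenoWeight_le_one_div_rpow {μ : ℝ} {k : ι} (hθk : θ k ≤ 1) (hμ : 0 < μ)
    (hμI : μ ≤ I k) (ht : 0 ≤ t) (hε : 0 ≤ ε) : wenoWeight θ I t ε k ≤ 1 / μ ^ t :=
  div_le_div₀ zero_le_one hθk (Real.rpow_pos_of_pos hμ t)
    ((Real.rpow_le_rpow hμ.le hμI ht).trans (le_add_of_nonneg_right hε))

theorem div_le_wenoWeight {θmin D : ℝ} {k : ι} (hθ : 0 ≤ θ k) (hθk : θmin ≤ θ k)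
    (hI : 0 ≤ I k) (hε : 0 < ε) (hD : I k ^ t + ε ≤ D) : θmin / D ≤ wenoWeight θ I t ε k :=
  div_le_div₀ hθ hθk (add_pos_of_nonneg_of_pos (Real.rpow_nonneg hI t) hε) hD

theorem wenoWeight_div_sum_le [Fintype ι] (hθ0 : ∀ k, 0 ≤ θ k) (hθ1 : ∀ k, θ k ≤ 1)
    (hI0 : ∀ k, 0 ≤ I k) (hε : 0 < ε) (ht : 0 ≤ t) {θmin μ D : ℝ} (hθmin : 0 < θmin) (hμ : 0 < μ) {k0 k : ι}
    (hθk0 : θmin ≤ θ k0) (hD : I k0 ^ t + ε ≤ D) (hμI : μ ≤ I k) :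
    wenoWeight θ I t ε k / ∑ j, wenoWeight θ I t ε j ≤ D / (θmin * μ ^ t) := by
  have hD0 : 0 < D := (add_pos_of_nonneg_of_pos (Real.rpow_nonneg (hI0 k0) t) hε).trans_le hD
  have hμt : 0 < μ ^ t := Real.rpow_pos_of_pos hμ t
  have hk0 : θmin / D ≤ wenoWeight θ I t ε k0 := div_le_wenoWeight (hθ0 k0) hθk0 (hI0 k0) hε hD
  calc wenoWeight θ I t ε k / ∑ j, wenoWeight θ I t ε j
      ≤ wenoWeight θ I t ε k / wenoWeight θ I t ε k0 :=
        div_sum_le_div_of_pos _ (wenoWeight_nonneg hθ0 hI0 hε.le)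
          ((div_pos hθmin hD0).trans_le hk0) k
    _ ≤ (1 / μ ^ t) / (θmin / D) :=
        div_le_div₀ (by positivity) (wenoWeight_le_one_div_rpow (hθ1 k) hμ hμI ht hε.le)
          (by positivity) hk0
    _ = D / (θmin * μ ^ t) := by field_simp

end WenoWeight

theorem nonlinear_pu_mls_accuracy_general
    (m d : ℕ) (t : ℝ) (ht : 1 ≤ t)
    (h : ℝ) (hh : 0 < h) (hh1 : h ≤ 1)
    (ε : ℝ) (hε : 0 < ε) (hε' : ε ≤ h ^ (t * (d + 1) : ℝ))
    (θ : Fin m → ℝ) (hθ0 : ∀ k, 0 ≤ θ k) (hθ1 : ∑ k, θ k = 1)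
    (I : Fin m → ℝ) (hI0 : ∀ k, 0 ≤ I k)
    (K1 : Finset (Fin m))
    (θmin c1 μ A M : ℝ)
    (hθmin : 0 < θmin) (hc1 : 0 ≤ c1) (hμ : 0 < μ) (hA : 0 ≤ A) (hM : 0 ≤ M)
    (k0 : Fin m) (hk0 : k0 ∈ K1) (hθk0 : θmin ≤ θ k0)
    (hIsmooth : ∀ k ∈ K1, I k ≤ c1 * h ^ (d + 1))
    (hIrough : ∀ k ∉ K1, μ ≤ I k)
    (p : Fin m → ℝ) (y : ℝ)
    (hpsmooth : ∀ k ∈ K1, |p k - y| ≤ A * h ^ (d + 1))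
    (hprough : ∀ k ∉ K1, |p k - y| ≤ M) :
    |(∑ k, ((θ k / (I k ^ t + ε)) / ∑ j, θ j / (I j ^ t + ε)) * p k) - y| ≤
      (A + m * M * (c1 ^ t + 1) / (θmin * μ ^ t)) * h ^ (d + 1) := by
  set H : ℝ := h ^ (d + 1) with hH
  have hεH : ε ≤ H ^ t := by
    rwa [hH, ← Real.rpow_natCast, ← Real.rpow_mul hh.le, mul_comm, Nat.cast_succ]
  have hθle1 (k : Fin m) : θ k ≤ 1 := hθ1 ▸ single_le_sum (fun j _ => hθ0 j) (mem_univ k)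
  have hD := rpow_add_le_mul_of_le_mul (hI0 k0) hc1 (by positivity) (pow_le_one₀ hh.le hh1) ht
    (hIsmooth k0 hk0) hεH
  set β : Fin m → ℝ := fun k => wenoWeight θ I t ε k / ∑ j, wenoWeight θ I t ε j
  have hS : 0 < ∑ j, wenoWeight θ I t ε j :=
    (div_pos (hθmin.trans_le hθk0)
      (add_pos_of_nonneg_of_pos (Real.rpow_nonneg (hI0 k0) t) hε)).trans_le
        (single_le_sum (fun j _ => wenoWeight_nonneg hθ0 hI0 hε.le j) (mem_univ k0))
  have hβ0 (k : Fin m) : 0 ≤ β k := div_nonneg (wenoWeight_nonneg hθ0 hI0 hε.le k) hS.le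
  have hβ1 : ∑ k, β k = 1 := by rw [← sum_div, div_self hS.ne']
  have hβrough (k : Fin m) (hk : k ∉ K1) :
      β k * |p k - y| ≤ (c1 ^ t + 1) * H / (θmin * μ ^ t) * M :=
    mul_le_mul (wenoWeight_div_sum_le hθ0 hθle1 hI0 hε (by linarith) hθmin hμ hθk0 hD
      (hIrough k hk)) (hprough k hk) (abs_nonneg _) (by positivity)
  calc |∑ k, β k * p k - y| ≤ ∑ k, β k * |p k - y| :=
        abs_sum_mul_sub_le_sum_mul_abs_sub β p y hβ0 hβ1
    _ ≤ A * H + m * ((c1 ^ t + 1) * H / (θmin * μ ^ t) * M) := by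
        simpa only [Fintype.card_fin] using sum_mul_le_add_card_mul β _ K1 hβ0 hβ1
          (by positivity) (by positivity) hpsmooth hβrough
    _ = _ := by field_simp

/-- quantitative accuracy of the non-linear partition-of-unity
MLS operator with WENO-type weights `β_k = α_k / ∑ α_j`,
`α_k = θ_k / (I_k^t + ε)`. -/
theorem nonlinear_pu_mls_accuracy
    (m d : ℕ) (hm : 1 ≤ m) (t : ℝ) (ht : 1 ≤ t)
    (h : ℝ) (hh : 0 < h) (hh1 : h ≤ 1)
    (ε : ℝ) (hε : 0 < ε) (hε' : ε ≤ h ^ (t * (d + 1) : ℝ))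
    (θ : Fin m → ℝ) (hθ0 : ∀ k, 0 ≤ θ k) (hθ1 : ∑ k, θ k = 1)
    (I : Fin m → ℝ) (hI0 : ∀ k, 0 ≤ I k)
    (K1 : Finset (Fin m))
    (θmin c1 μ A M : ℝ)
    (hθmin : 0 < θmin) (hc1 : 0 ≤ c1) (hμ : 0 < μ) (hA : 0 ≤ A) (hM : 0 ≤ M)
    (k0 : Fin m) (hk0 : k0 ∈ K1) (hθk0 : θmin ≤ θ k0)
    (hIsmooth : ∀ k ∈ K1, I k ≤ c1 * h ^ (d + 1))
    (hIrough : ∀ k ∉ K1, μ ≤ I k)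
    (p : Fin m → ℝ) (y : ℝ)
    (hpsmooth : ∀ k ∈ K1, |p k - y| ≤ A * h ^ (d + 1))
    (hprough : ∀ k ∉ K1, |p k - y| ≤ M) :
    |(∑ k, ((θ k / (I k ^ t + ε)) / ∑ j, θ j / (I j ^ t + ε)) * p k) - y| ≤
      (A + m * M * (c1 ^ t + 1) / (θmin * μ ^ t)) * h ^ (d + 1) :=
  nonlinear_pu_mls_accuracy_general m d t ht h hh hh1 ε hε hε' θ hθ0 hθ1 I hI0 K1 θmin c1 μ A M
    hθmin hc1 hμ hA hM k0 hk0 hθk0 hIsmooth hIrough p y hpsmooth hprough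
end
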